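/- Let d ≥ 2 and c_γ ∈ {2, 3}, m ≥ m₀ := ⌈4/(d − 1/c_γ)⌉, 1/r ∈ I_{m,d}, l := min{⌊r⌋ − 1, m}, r̃ := r/(l+1) and p̃ := (1/2 + 2(1 − 1/r̃)/(d − 1/c_γ))^{−1}. Then: (i) the pair (p̃′, r̃′) of Hölder conjugates is admissible, i.e. 2/r̃′ + (d − 1/c_γ)(1/p̃′) = (d − 1/c_γ)(1/2) with p̃′, r̃′ ∈ [2, ∞]; (ii) (l+1)p̃ = (1/2 − 2/(r(d − 1/c_γ)) − (1/(2(l+1)))(l − 4/(d − 1/c_γ)))^{−1}; and (iii) for every p with 1/p ∈ J_{r,d} one has p ≥ p_a := (1/2 − 2/(r(d − 1/c_γ)))^{−1}, the pair (p_a, r) is admissible, and (l+1)p̃ ≥ p. -/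
import Mathlib


open MeasureTheory Filter
open scoped ENNReal FourierTransform

noncomputable section

/-- Euclidean space `ℝ^d`. -/
abbrev Sp (d : ℕ) : Type := EuclideanSpace ℝ (Fin d)

/-- A smooth partition of unity `(σ_k)_{k ∈ ℤ^d}` adapted to the unit cubes
`Q_k = k + (-1/2, 1/2]^d`:  each `σ_k` is smooth, supported in `B_{√d}(k)`,
uniformly bounded below on `Q_k`, and the family sums to `1`. -/
structure BoxPartition (d : ℕ) where
  σ : (Fin d → ℤ) → Sp d → ℂ
  smooth : ∀ k, ContDiff ℝ (⊤ : ℕ∞) (σ k)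
  support_subset : ∀ k, Function.support (σ k) ⊆
    Metric.ball ((EuclideanSpace.equiv (Fin d) ℝ).symm (fun i => (k i : ℝ))) (Real.sqrt d)
  lower_bound : ∃ C : ℝ, 0 < C ∧ ∀ k ξ,
    (∀ i, (EuclideanSpace.equiv (Fin d) ℝ) ξ i - (k i : ℝ) ∈ Set.Ioc (-(1/2) : ℝ) (1/2)) →
    C ≤ ‖σ k ξ‖
  partition : ∀ ξ, HasSum (fun k => σ k ξ) 1

/-- The isometric decomposition (box) operator `□_k = 𝓕⁻¹ σ_k 𝓕`, realized as
convolution with the inverse Fourier transform of `σ_k`. -/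
def boxOp {d : ℕ} (P : BoxPartition d) (k : Fin d → ℤ) (f : Sp d → ℂ) : Sp d → ℂ :=
  fun x => ∫ y, 𝓕⁻ (P.σ k) (x - y) * f y

/-- The Japanese bracket `⟨k⟩^s = (1 + |k|²)^{s/2}` as an extended nonnegative real. -/
def jbr {d : ℕ} (k : Fin d → ℤ) (s : ℝ) : ℝ≥0∞ :=
  ENNReal.ofReal ((1 + ∑ i, ((k i : ℝ))^2) ^ (s/2))

/-- The `ℓ^q` norm of a family of extended nonnegative reals. -/
def lqNorm {ι : Type*} (q : ℝ≥0∞) (a : ι → ℝ≥0∞) : ℝ≥0∞ :=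
  if q = ∞ then ⨆ k, a k else (∑' k, a k ^ q.toReal) ^ (1 / q.toReal)

/-- The `L^r(ℝ)` norm (with respect to Lebesgue measure in time) of an
`ℝ≥0∞`-valued function. -/
def timeNorm (r : ℝ≥0∞) (g : ℝ → ℝ≥0∞) : ℝ≥0∞ :=
  if r = ∞ then essSup g volume else (∫⁻ t, g t ^ r.toReal) ^ (1 / r.toReal)

/-- The modulation space norm `‖f‖_{M^s_{p,q}} = ‖(⟨k⟩^s ‖□_k f‖_{L^p})_k‖_{ℓ^q}`. -/
def modNorm {d : ℕ} (P : BoxPartition d) (s : ℝ) (p q : ℝ≥0∞) (f : Sp d → ℂ) : ℝ≥0∞ :=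
  lqNorm q (fun k => jbr k s * eLpNorm (boxOp P k f) p volume)

/-- The Planchon-type space norm
`‖u‖_{l^{s,q}_□(L^r L^p)} = ‖(⟨k⟩^s ‖□_k u‖_{L^r_t L^p_x})_k‖_{ℓ^q}`
(box operators act in the space variable only). -/
def planchonNorm {d : ℕ} (P : BoxPartition d) (s : ℝ) (q r p : ℝ≥0∞)
    (u : ℝ → Sp d → ℂ) : ℝ≥0∞ :=
  lqNorm q (fun k => jbr k s * timeNorm r (fun t => eLpNorm (boxOp P k (u t)) p volume))

/-- The norm of `X = l^{s,q}_□(L^∞ L²) ∩ l^{s,q}_□(L^r L^p)`. -/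
def XNorm {d : ℕ} (P : BoxPartition d) (s : ℝ) (q r p : ℝ≥0∞) (u : ℝ → Sp d → ℂ) : ℝ≥0∞ :=
  planchonNorm P s q ∞ 2 u + planchonNorm P s q r p u

/-- Membership in `X = l^{s,q}_□(L^∞ L²) ∩ l^{s,q}_□(L^r L^p)`. -/
def InX {d : ℕ} (P : BoxPartition d) (s : ℝ) (q r p : ℝ≥0∞) (u : ℝ → Sp d → ℂ) : Prop :=
  planchonNorm P s q ∞ 2 u < ∞ ∧ planchonNorm P s q r p u < ∞

/-- The first coordinate `x₁` of a point of `ℝ^d`. -/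
def firstCoord {d : ℕ} (ξ : Sp d) : ℝ :=
  if h : 0 < d then (EuclideanSpace.equiv (Fin d) ℝ) ξ ⟨0, h⟩ else 0

/-- The dispersion relation `α|ξ|² + βξ₁³ + γξ₁⁴`. -/
def dispersion {d : ℕ} (α β γ : ℝ) (ξ : Sp d) : ℝ :=
  α * ‖ξ‖ ^ 2 + β * (firstCoord ξ) ^ 3 + γ * (firstCoord ξ) ^ 4

/-- The free Schrödinger propagator with higher-order anisotropic dispersion,
`W(t) = 𝓕⁻¹ e^{i(α|ξ|² + βξ₁³ + γξ₁⁴)t} 𝓕`. -/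
def propagator {d : ℕ} (α β γ : ℝ) (t : ℝ) (f : Sp d → ℂ) : Sp d → ℂ :=
  𝓕⁻ (fun ξ => Complex.exp (Complex.I * ((dispersion α β γ ξ * t : ℝ) : ℂ)) * 𝓕 f ξ)

/-- The Duhamel integral `∫₀ᵗ W(t-τ) F(τ) dτ`. -/
def duhamel {d : ℕ} (α β γ : ℝ) (F : ℝ → Sp d → ℂ) : ℝ → Sp d → ℂ :=
  fun t x => ∫ τ in (0:ℝ)..t, propagator α β γ (t - τ) (F τ) x

/-- The Duhamel integral from `-∞`: `∫_{-∞}^t W(t-τ) F(τ) dτ`. -/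
def duhamelFrom {d : ℕ} (α β γ : ℝ) (F : ℝ → Sp d → ℂ) : ℝ → Sp d → ℂ :=
  fun t x => ∫ τ in Set.Iic t, propagator α β γ (t - τ) (F τ) x

/-- A power-like nonlinearity `π^{m+1}(z)`: a fixed product of `m+1` factors,
each equal to `z` or its complex conjugate, together with a sign `c ∈ {1, -1}`. -/
def powerNonlin (m : ℕ) (c : ℂ) (ε : Fin (m + 1) → Bool) (z : ℂ) : ℂ :=
  c * ∏ j, (if ε j then (starRingEnd ℂ) z else z)

/-- The exponential nonlinearity `f(z) = λ(e^{ρ|z|²} - 1)z`. -/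
def expNonlin (lam : ℂ) (ρ : ℝ) (z : ℂ) : ℂ :=
  lam * (Complex.exp (((ρ * ‖z‖ ^ 2 : ℝ) : ℂ)) - 1) * z

/-- `c_γ = 2` if `γ ≠ 0` and `c_γ = 3` if `γ = 0`. -/
def cgam (γ : ℝ) : ℝ := if γ ≠ 0 then 2 else 3

/-- The effective dimension `d - 1/c_γ`. -/
def dEff (d : ℕ) (γ : ℝ) : ℝ := (d : ℝ) - (cgam γ)⁻¹

/-- The minimal power `m₀ = ⌈4/(d - 1/c_γ)⌉`. -/
def mMin (d : ℕ) (γ : ℝ) : ℤ := ⌈4 / dEff d γ⌉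

/-- The interval `I_{m,d} = [1/(2(m+1)), 1/(m₀+1)]` of admissible `1/r`. -/
def Iset (m d : ℕ) (γ : ℝ) : Set ℝ :=
  Set.Icc (1 / (2 * ((m : ℝ) + 1))) (1 / ((mMin d γ : ℝ) + 1))

/-- The effective nonlinearity `l = min(⌊r⌋ - 1, m)`. -/
def leff (r : ℝ) (m : ℕ) : ℤ := min (⌊r⌋ - 1) (m : ℤ)

/-- The lower endpoint of `J_{r,d}`. -/
def Jlo (r : ℝ) (m d : ℕ) (γ : ℝ) : ℝ :=
  1 / 2 - 2 / (r * dEff d γ) -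
    (1 / (2 * ((leff r m : ℝ) + 1))) * ((leff r m : ℝ) - 4 / dEff d γ)

/-- The upper endpoint of `J_{r,d}`. -/
def Jhi (r : ℝ) (d : ℕ) (γ : ℝ) : ℝ := 1 / 2 - 2 / (r * dEff d γ)

/-- The interval `J_{r,d}` of admissible `1/p`. -/
def Jset (r : ℝ) (m d : ℕ) (γ : ℝ) : Set ℝ := Set.Icc (Jlo r m d γ) (Jhi r d γ)

/-- A pair `(p, r) ∈ [2,∞] × [2,∞]` is admissible if
`2/r + (d - 1/c_γ)/p = (d - 1/c_γ)/2`. -/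
def Admissible (d : ℕ) (γ : ℝ) (p r : ℝ≥0∞) : Prop :=
  2 ≤ p ∧ 2 ≤ r ∧ 2 * (r⁻¹).toReal + dEff d γ * (p⁻¹).toReal = dEff d γ * (1 / 2)

/-- The regularity condition on `s`: `s ≥ 0` if `q = 1` and `s > d(1 - 1/q) = d/q'`
if `q > 1`. -/
def sCond (d : ℕ) (q : ℝ≥0∞) (s : ℝ) : Prop :=
  (q = 1 ∧ 0 ≤ s) ∨ (1 < q ∧ (d : ℝ) * (1 - (q⁻¹).toReal) < s)

/-- `u` is a global mild solution of the higher-order NLS with nonlinearity `f`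
and initial datum `u₀`: `u(t) = W(t)u₀ + ∫₀ᵗ W(t-τ) f(u(τ)) dτ`. -/
def IsMildSolution {d : ℕ} (α β γ : ℝ) (f : ℂ → ℂ) (u₀ : Sp d → ℂ)
    (u : ℝ → Sp d → ℂ) : Prop :=
  ∀ t x, u t x = propagator α β γ t u₀ x + duhamel α β γ (fun τ y => f (u τ y)) t x

/-- `u` solves the final-state (scattering) equation with datum `u₀⁻` at `-∞`:
`u(t) = W(t)u₀⁻ + ∫_{-∞}^t W(t-τ) f(u(τ)) dτ`. -/
def IsMildSolutionFrom {d : ℕ} (α β γ : ℝ) (f : ℂ → ℂ) (u₀ : Sp d → ℂ)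
    (u : ℝ → Sp d → ℂ) : Prop :=
  ∀ t x, u t x = propagator α β γ t u₀ x + duhamelFrom α β γ (fun τ y => f (u τ y)) t x

end

private lemma aux_inv_eq (x : ℝ) (hx : 0 < x) (y : ℝ≥0∞)
    (h : (ENNReal.ofReal x)⁻¹ + y⁻¹ = 1) :
    x⁻¹ ≤ 1 ∧ y⁻¹ = ENNReal.ofReal (1 - x⁻¹) := by
  have ha : (ENNReal.ofReal x)⁻¹ = ENNReal.ofReal x⁻¹ :=
    (ENNReal.ofReal_inv_of_pos hx).symm
  have hle : ENNReal.ofReal x⁻¹ ≤ 1 := by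
    calc ENNReal.ofReal x⁻¹ = (ENNReal.ofReal x)⁻¹ := ha.symm
    _ ≤ (ENNReal.ofReal x)⁻¹ + y⁻¹ := le_self_add
    _ = 1 := h
  have hx1 : x⁻¹ ≤ 1 := by rwa [ENNReal.ofReal_le_one] at hle
  refine ⟨hx1, ?_⟩
  have hy : y⁻¹ = 1 - ENNReal.ofReal x⁻¹ := by
    rw [ha] at h
    exact ENNReal.eq_sub_of_add_eq (by simp) (by rw [add_comm]; exact h)
  rw [hy, ← ENNReal.ofReal_one, ← ENNReal.ofReal_sub _ (inv_nonneg.mpr hx.le)]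

private lemma aux_Jlo (r dE L : ℝ) (hr : 0 < r) (hdE : 0 < dE) (hL : 0 < L + 1) :
    1 / 2 - 2 / (r * dE) - 1 / (2 * (L + 1)) * (L - 4 / dE) =
      (1 / 2 + 2 * (1 - (r / (L + 1))⁻¹) / dE) / (L + 1) := by
  have h1 : r ≠ 0 := hr.ne'
  have h2 : dE ≠ 0 := hdE.ne'
  have h3 : L + 1 ≠ 0 := hL.ne'
  field_simp
  ring

private lemma aux_mul_one (X L : ℝ) (hX : 0 < X) (hL : 0 < L + 1) :
    X / (L + 1) * ((L + 1) * X⁻¹) = 1 := by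
  field_simp

private lemma aux_scale1 (B dE : ℝ) (hdE : 0 < dE) :
    2 * B + dE * (1 - (1 / 2 + 2 * B / dE)) = dE * (1 / 2) := by
  field_simp
  ring

private lemma aux_scale2 (r dE : ℝ) (hr : 0 < r) (hdE : 0 < dE) :
    2 * r⁻¹ + dE * (1 / 2 - 2 / (r * dE)) = dE * (1 / 2) := by
  field_simp
  ring

private lemma aux_two_inv : (2:ℝ≥0∞)⁻¹ = ENNReal.ofReal (1/2) := by
  rw [ENNReal.ofReal_div_of_pos (by norm_num)]
  simp

set_option maxHeartbeats 2000000 in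
/-- exponent arithmetic behind the contraction argument:
with `l = min(⌊r⌋ - 1, m)`, `r̃ = r/(l+1)` and
`p̃ = (1/2 + 2(1 - 1/r̃)/(d - 1/c_γ))⁻¹`:
(i) the pair `(p̃', r̃')` of Hölder conjugates is admissible;
(ii) `(l+1)p̃` equals the reciprocal of the lower endpoint of `J_{r,d}`;
(iii) every `p` with `1/p ∈ J_{r,d}` satisfies `p ≥ p_a := (1/2 - 2/(r(d - 1/c_γ)))⁻¹`,
the pair `(p_a, r)` is admissible, and `(l+1)p̃ ≥ p`. -/
theorem stmt19 (d : ℕ) (hd : 2 ≤ d) (γ : ℝ) (m : ℕ) (hm : mMin d γ ≤ (m : ℤ))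
    (r : ℝ) (hr : r⁻¹ ∈ Iset m d γ) :
    -- (i) the conjugate pair `(p̃', r̃')` is admissible
    (∀ pt' rt' : ℝ≥0∞,
      (ENNReal.ofReal ((1 / 2 +
          2 * (1 - (r / ((leff r m : ℝ) + 1))⁻¹) / dEff d γ)⁻¹))⁻¹ + pt'⁻¹ = 1 →
      (ENNReal.ofReal (r / ((leff r m : ℝ) + 1)))⁻¹ + rt'⁻¹ = 1 →
      Admissible d γ pt' rt') ∧
    -- (ii) `(l+1)p̃` is the reciprocal of the lower endpoint of `J_{r,d}`
    ((leff r m : ℝ) + 1) *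
        (1 / 2 + 2 * (1 - (r / ((leff r m : ℝ) + 1))⁻¹) / dEff d γ)⁻¹ =
      (Jlo r m d γ)⁻¹ ∧
    -- (iii) bounds for every `p` with `1/p ∈ J_{r,d}`, and admissibility of `(p_a, r)`
    ∀ p : ℝ≥0∞, 1 ≤ p → (p⁻¹).toReal ∈ Jset r m d γ →
      ENNReal.ofReal ((Jhi r d γ)⁻¹) ≤ p ∧
      Admissible d γ (ENNReal.ofReal ((Jhi r d γ)⁻¹)) (ENNReal.ofReal r) ∧
      p ≤ ENNReal.ofReal (((leff r m : ℝ) + 1) *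
        (1 / 2 + 2 * (1 - (r / ((leff r m : ℝ) + 1))⁻¹) / dEff d γ)⁻¹) := by
  -- ## basic positivity facts
  have hc : cgam γ = 2 ∨ cgam γ = 3 := by unfold cgam; split <;> simp
  have hcinv : (cgam γ)⁻¹ ≤ 1/2 := by rcases hc with h | h <;> rw [h] <;> norm_num
  have hd2 : (2:ℝ) ≤ d := by exact_mod_cast hd
  have hdE32 : (3:ℝ)/2 ≤ dEff d γ := by unfold dEff; linarith
  have hdEpos : (0:ℝ) < dEff d γ := by linarith
  have hm0ge : 4 / dEff d γ ≤ (mMin d γ : ℝ) := Int.le_ceil _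
  have hm01 : (1:ℤ) ≤ mMin d γ := by
    have h0 : (0:ℝ) < 4 / dEff d γ := by positivity
    have := Int.lt_ceil.mpr (by exact_mod_cast h0 : ((0:ℤ):ℝ) < 4 / dEff d γ)
    unfold mMin; omega
  have hM1 : (1:ℝ) ≤ (mMin d γ : ℝ) := by exact_mod_cast hm01
  obtain ⟨hr1, hr2⟩ := hr
  -- bounds on r
  have hrinvpos : 0 < r⁻¹ := lt_of_lt_of_le (by positivity) hr1
  have hrpos : (0:ℝ) < r := inv_pos.mp hrinvpos
  have hMpos : (0:ℝ) < (mMin d γ : ℝ) + 1 := by linarith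
  have hrge : (mMin d γ : ℝ) + 1 ≤ r := by
    have h2 := mul_le_mul_of_nonneg_left hr2 hrpos.le
    have h3 := mul_inv_cancel₀ hrpos.ne'
    rw [div_eq_mul_inv] at h2
    nlinarith [mul_inv_cancel₀ hMpos.ne', inv_pos.mpr hMpos]
  have hrle : r ≤ 2 * ((m:ℝ) + 1) := by
    have h2 := mul_le_mul_of_nonneg_left hr1 hrpos.le
    have h3 := mul_inv_cancel₀ hrpos.ne'
    rw [div_eq_mul_inv] at h2
    have hmp : (0:ℝ) < 2 * ((m:ℝ) + 1) := by positivity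
    nlinarith [mul_inv_cancel₀ hmp.ne', inv_pos.mpr hmp]
  have hr2' : (2:ℝ) ≤ r := by linarith
  have hrdE4 : (4:ℝ) < r * dEff d γ := by
    have h4 := mul_le_mul_of_nonneg_right hm0ge hdEpos.le
    rw [div_mul_cancel₀ _ hdEpos.ne'] at h4
    nlinarith
  -- bounds on l
  have hfloor2 : (2:ℤ) ≤ ⌊r⌋ := Int.le_floor.mpr (by exact_mod_cast hr2')
  have hmZ : (1:ℤ) ≤ (m:ℤ) := le_trans hm01 hm
  have hL1 : (1:ℤ) ≤ leff r m := le_min (by omega) hmZ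
  have hL1' : (1:ℝ) ≤ (leff r m : ℝ) := by exact_mod_cast hL1
  have hLpos : (0:ℝ) < (leff r m : ℝ) + 1 := by linarith
  have hLr : (leff r m : ℝ) + 1 ≤ r := by
    have h1 : leff r m + 1 ≤ ⌊r⌋ := by
      have := min_le_left (⌊r⌋ - 1) (m:ℤ); unfold leff; omega
    calc (leff r m : ℝ) + 1 = ((leff r m + 1 : ℤ) : ℝ) := by push_cast; ring
    _ ≤ (⌊r⌋ : ℝ) := by exact_mod_cast h1
    _ ≤ r := Int.floor_le r
  have hrL : r ≤ 2 * ((leff r m : ℝ) + 1) := by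
    rcases le_or_gt ((m:ℤ)) (⌊r⌋ - 1) with h | h
    · have hle : leff r m = (m:ℤ) := min_eq_right h
      rw [hle]; push_cast; linarith
    · have hle : leff r m = ⌊r⌋ - 1 := min_eq_left (by omega)
      have hfl : r < (⌊r⌋:ℝ) + 1 := Int.lt_floor_add_one r
      have hf2 : (2:ℝ) ≤ (⌊r⌋:ℝ) := by exact_mod_cast hfloor2
      rw [hle]; push_cast; linarith
  -- bounds on r̃ = r/(l+1)
  have hrtpos : (0:ℝ) < r / ((leff r m : ℝ) + 1) := by positivity
  have hrt1 : 1 ≤ r / ((leff r m : ℝ) + 1) := (one_le_div hLpos).mpr hLr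
  have hrt2 : r / ((leff r m : ℝ) + 1) ≤ 2 := (div_le_iff₀ hLpos).mpr (by linarith)
  have hrtinv1 : (r / ((leff r m : ℝ) + 1))⁻¹ ≤ 1 := by
    have := mul_inv_cancel₀ hrtpos.ne'
    nlinarith [inv_pos.mpr hrtpos]
  have hrtinvhalf : 1/2 ≤ (r / ((leff r m : ℝ) + 1))⁻¹ := by
    have := mul_inv_cancel₀ hrtpos.ne'
    nlinarith [inv_pos.mpr hrtpos]
  have hBnn : 0 ≤ 1 - (r / ((leff r m : ℝ) + 1))⁻¹ := by linarith
  have hBhalf : 1 - (r / ((leff r m : ℝ) + 1))⁻¹ ≤ 1/2 := by linarith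
  -- bounds on X = 1/p̃
  have hXhalf : 1/2 ≤ 1 / 2 + 2 * (1 - (r / ((leff r m : ℝ) + 1))⁻¹) / dEff d γ := by
    have : 0 ≤ 2 * (1 - (r / ((leff r m : ℝ) + 1))⁻¹) / dEff d γ := by positivity
    linarith
  have hXpos : (0:ℝ) < 1 / 2 + 2 * (1 - (r / ((leff r m : ℝ) + 1))⁻¹) / dEff d γ := by
    linarith
  -- (ii) : Jlo = X / (l+1)
  have hJloX : Jlo r m d γ =
      (1 / 2 + 2 * (1 - (r / ((leff r m : ℝ) + 1))⁻¹) / dEff d γ) /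
        ((leff r m : ℝ) + 1) := by
    unfold Jlo
    exact aux_Jlo r (dEff d γ) ((leff r m : ℝ)) hrpos hdEpos hLpos
  have hii : ((leff r m : ℝ) + 1) *
      (1 / 2 + 2 * (1 - (r / ((leff r m : ℝ) + 1))⁻¹) / dEff d γ)⁻¹ =
      (Jlo r m d γ)⁻¹ := by
    refine (inv_eq_of_mul_eq_one_right ?_).symm
    rw [hJloX]
    exact aux_mul_one _ _ hXpos hLpos
  have hJlopos : 0 < Jlo r m d γ := by rw [hJloX]; positivity
  have hJhipos : 0 < Jhi r d γ := by
    unfold Jhi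
    have h4 : (0:ℝ) < r * dEff d γ := by positivity
    have : 2 / (r * dEff d γ) < 1/2 := by rw [div_lt_iff₀ h4]; linarith
    linarith
  have hJhihalf : Jhi r d γ < 1/2 := by
    unfold Jhi
    have : 0 < 2 / (r * dEff d γ) := by positivity
    linarith
  refine ⟨?_, hii, ?_⟩
  · -- (i)
    intro pt' rt' h1 h2
    obtain ⟨hX1, hpt'⟩ := aux_inv_eq _ (inv_pos.mpr hXpos) pt' h1
    obtain ⟨-, hrt'⟩ := aux_inv_eq _ hrtpos rt' h2
    rw [inv_inv] at hX1 hpt'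
    refine ⟨?_, ?_, ?_⟩
    · rw [← ENNReal.inv_le_inv, aux_two_inv, hpt']
      exact ENNReal.ofReal_le_ofReal (by linarith)
    · rw [← ENNReal.inv_le_inv, aux_two_inv, hrt']
      exact ENNReal.ofReal_le_ofReal (by linarith)
    · rw [hpt', hrt', ENNReal.toReal_ofReal hBnn,
        ENNReal.toReal_ofReal (by linarith : (0:ℝ) ≤
          1 - (1 / 2 + 2 * (1 - (r / ((leff r m : ℝ) + 1))⁻¹) / dEff d γ))]
      exact aux_scale1 _ _ hdEpos
  · -- (iii)
    intro p hp1 hpJ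
    simp only [Jset, Set.mem_Icc] at hpJ
    obtain ⟨hpl, hph⟩ := hpJ
    have hpne : p ≠ ∞ := by
      intro h
      rw [h] at hpl
      simp at hpl
      linarith
    have hpt1 : (1:ℝ) ≤ p.toReal := by
      have := ENNReal.toReal_mono hpne hp1
      simpa using this
    have hptpos : (0:ℝ) < p.toReal := by linarith
    rw [ENNReal.toReal_inv] at hpl hph
    refine ⟨?_, ⟨?_, ?_, ?_⟩, ?_⟩
    · -- p_a ≤ p
      have hkey : (Jhi r d γ)⁻¹ ≤ p.toReal := by
        have h5 := mul_le_mul_of_nonneg_left hph hptpos.le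
        rw [mul_inv_cancel₀ hptpos.ne'] at h5
        have h6 := mul_inv_cancel₀ hJhipos.ne'
        nlinarith [inv_pos.mpr hJhipos]
      calc ENNReal.ofReal ((Jhi r d γ)⁻¹) ≤ ENNReal.ofReal p.toReal :=
        ENNReal.ofReal_le_ofReal hkey
      _ = p := ENNReal.ofReal_toReal hpne
    · -- 2 ≤ p_a
      have hkey : (2:ℝ) ≤ (Jhi r d γ)⁻¹ := by
        have h6 := mul_inv_cancel₀ hJhipos.ne'
        nlinarith [inv_pos.mpr hJhipos]
      calc (2:ℝ≥0∞) = ENNReal.ofReal 2 := by simp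
      _ ≤ _ := ENNReal.ofReal_le_ofReal hkey
    · -- 2 ≤ r
      calc (2:ℝ≥0∞) = ENNReal.ofReal 2 := by simp
      _ ≤ _ := ENNReal.ofReal_le_ofReal hr2'
    · -- scaling for (p_a, r)
      rw [← ENNReal.ofReal_inv_of_pos hrpos,
        ← ENNReal.ofReal_inv_of_pos (inv_pos.mpr hJhipos), inv_inv,
        ENNReal.toReal_ofReal (inv_nonneg.mpr hrpos.le),
        ENNReal.toReal_ofReal hJhipos.le]
      unfold Jhi
      exact aux_scale2 _ _ hrpos hdEpos
    · -- p ≤ (l+1)p̃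
      rw [hii]
      have hkey : p.toReal ≤ (Jlo r m d γ)⁻¹ := by
        have h5 := mul_le_mul_of_nonneg_left hpl hptpos.le
        rw [mul_inv_cancel₀ hptpos.ne'] at h5
        have h6 := mul_inv_cancel₀ hJlopos.ne'
        nlinarith [inv_pos.mpr hJlopos]
      calc p = ENNReal.ofReal p.toReal := (ENNReal.ofReal_toReal hpne).symm
      _ ≤ _ := ENNReal.ofReal_le_ofReal hkey
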